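/- arXiv:1206.3038 — 8 statements merged into one kernel-verified Lean document; each statement's English description precedes it below -/
import Mathlib

section
/- (Delsarte bound) Let C be a linear code of length n over Z4 and let s(C⊥) be the number of distinct nonzero integers i such that some codeword of the dual code C⊥ has Lee weight i. Then the Lee covering radius satisfies r_L(C) ≤ s(C⊥). -/
/-- The Lee weight on `ZMod 4`: `w_L(0)=0, w_L(1)=1, w_L(2)=2, w_L(3)=1`. -/
def leeWt (x : ZMod 4) : ℕ := min x.val (4 - x.val)

/-- The Euclidean weight on `ZMod 4`: `w_E(0)=0, w_E(1)=1, w_E(2)=4, w_E(3)=1`. -/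
def euclWt (x : ZMod 4) : ℕ := (min x.val (4 - x.val)) ^ 2

/-- The Lee distance between two vectors over `ZMod 4`. -/
def dLee {ι : Type*} [Fintype ι] (x y : ι → ZMod 4) : ℕ := ∑ i, leeWt (x i - y i)

/-- The Euclidean distance between two vectors over `ZMod 4`. -/
def dEucl {ι : Type*} [Fintype ι] (x y : ι → ZMod 4) : ℕ := ∑ i, euclWt (x i - y i)

/-- The covering radius of a code over `ZMod 4` with respect to the Lee distance. -/
noncomputable def covRadLee {ι : Type*} [Fintype ι] (C : Set (ι → ZMod 4)) : ℕ :=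
  sSup (Set.range fun u : ι → ZMod 4 => sInf (dLee u '' C))

/-- The covering radius of a code over `ZMod 4` with respect to the Euclidean distance. -/
noncomputable def covRadEucl {ι : Type*} [Fintype ι] (C : Set (ι → ZMod 4)) : ℕ :=
  sSup (Set.range fun u : ι → ZMod 4 => sInf (dEucl u '' C))

/-- The dual code of a code over `ZMod 4`, with respect to the standard inner product. -/
def dualCode {ι : Type*} [Fintype ι] (C : Set (ι → ZMod 4)) : Set (ι → ZMod 4) :=
  {x | ∀ c ∈ C, ∑ i, x i * c i = 0}

/-!
Let `α = ∏ (X - d)` over the nonzero Lee weights `d` of `C⊥`, so `deg α = s(C⊥)` and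
`α(0) ≠ 0`. If some `u` had Lee distance `> s(C⊥)` from every codeword, evaluate
`∑_{c ∈ C} ∑_v α(w_L v) χ(⟨u + c, v⟩)`, with `χ a = i ^ a`, in two ways.
For fixed `c` the inner sum vanishes: the weight enumerator
`∑_v χ(⟨y, v⟩) X ^ w_L(v) = (1 + X) ^ (2n - w_L y) (1 - X) ^ w_L y` is divisible by
`(1 - X) ^ w_L y`, so applying the Euler operator `(X d/dX) ^ k` and evaluating at `1`
gives `∑_v (w_L v) ^ k χ(⟨y, v⟩) = 0` for `k < w_L y`. Summing over `c` first instead,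
orthogonality of characters over `C` keeps only `v ∈ C⊥`, where `α` kills every term except
`v = 0`, which contributes `α(0) |C| ≠ 0`.
-/

open Polynomial

noncomputable def leeChar : AddChar (ZMod 4) ℂ := AddChar.zmodChar 4 Complex.I_pow_four

theorem leeChar_eq_one_iff (a : ZMod 4) : leeChar a = 1 ↔ a = 0 :=
  (AddChar.zmodChar_primitive_of_primitive_root 4 Complex.isPrimitiveRoot_I).zmod_char_eq_one_iff
    4 a

theorem AddChar.map_finsetSum {ι A M : Type*} [AddCommMonoid A] [CommMonoid M]
    (ψ : AddChar A M) (s : Finset ι) (f : ι → A) : ψ (∑ i ∈ s, f i) = ∏ i ∈ s, ψ (f i) :=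
  map_prod ψ.toMonoidHom (fun i => Multiplicative.ofAdd (f i)) s

theorem leeWt_le_two : ∀ a : ZMod 4, leeWt a ≤ 2 := by decide

theorem leeWt_eq_zero_iff : ∀ a : ZMod 4, leeWt a = 0 ↔ a = 0 := by decide

theorem sum_leeChar_mul_X_pow_leeWt (b : ZMod 4) :
    ∑ a, C (leeChar (b * a)) * (X : ℂ[X]) ^ leeWt a =
      (1 + X) ^ (2 - leeWt b) * (1 - X) ^ leeWt b := by
  have h1 : leeChar 1 = Complex.I := pow_one _
  have h2 : leeChar 2 = -1 := Complex.I_sq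
  have h3 : leeChar 3 = -Complex.I := by
    change Complex.I ^ 3 = _; rw [pow_succ, Complex.I_sq, neg_one_mul]
  have hw : leeWt 0 = 0 ∧ leeWt 1 = 1 ∧ leeWt 2 = 2 ∧ leeWt 3 = 1 := by decide
  rw [show ∀ f : ZMod 4 → ℂ[X], ∑ a, f a = f 0 + f 1 + f 2 + f 3 from Fin.sum_univ_four]
  obtain rfl | rfl | rfl | rfl : b = 0 ∨ b = 1 ∨ b = 2 ∨ b = 3 := by decide +revert
  all_goals
    reduce_mod_char
    simp only [hw, h1, h2, h3, AddChar.map_zero_eq_one, map_neg, C_1]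
    ring

section EulerOperator

variable (R : Type*) [CommRing R]

noncomputable def eulerOp : R[X] →ₗ[R] R[X] := LinearMap.mulLeft R X ∘ₗ derivative

variable {R}

theorem eulerOp_apply (p : R[X]) : eulerOp R p = X * derivative p := rfl

theorem eulerOp_pow_monomial (k w : ℕ) (c : R) :
    (eulerOp R ^ k) (monomial w c) = monomial w ((w : R) ^ k * c) := by
  induction k with
  | zero => simp
  | succ k ih =>
    rw [pow_succ', Module.End.mul_apply, ih, eulerOp_apply, derivative_monomial]
    cases w with
    | zero => simp
    | succ w => rw [X_mul_monomial, Nat.add_sub_cancel]; congr 1; ring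

theorem one_sub_X_pow_dvd_eulerOp {m : ℕ} {p : R[X]} (h : (1 - X) ^ (m + 1) ∣ p) :
    (1 - X) ^ m ∣ eulerOp R p := by
  obtain ⟨g, rfl⟩ := h
  refine ⟨X * ((1 - X) * derivative g - C ((m : R) + 1) * g), ?_⟩
  rw [eulerOp_apply, derivative_mul, derivative_pow]
  simp only [derivative_sub, derivative_one, derivative_X, Nat.cast_add, Nat.cast_one, map_add,
    map_natCast, C_1, Nat.add_sub_cancel]
  ring

theorem one_sub_X_pow_dvd_eulerOp_pow {m k : ℕ} {p : R[X]} (h : (1 - X) ^ (m + k) ∣ p) :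
    (1 - X) ^ m ∣ (eulerOp R ^ k) p := by
  induction k generalizing p with
  | zero => simpa using h
  | succ k ih =>
    rw [pow_succ, Module.End.mul_apply]
    exact ih (one_sub_X_pow_dvd_eulerOp (by rwa [← add_assoc] at h))

theorem eval_one_eulerOp_pow_eq_zero {m k : ℕ} {p : R[X]} (hk : k < m) (h : (1 - X) ^ m ∣ p) :
    ((eulerOp R ^ k) p).eval 1 = 0 := by
  obtain ⟨j, rfl⟩ := Nat.exists_eq_add_of_lt hk
  obtain ⟨q, hq⟩ :=
    one_sub_X_pow_dvd_eulerOp_pow (m := j + 1) (k := k) (by convert h using 2; omega)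
  rw [hq]
  simp

end EulerOperator

section LeeWeight

variable {ι : Type*} [Fintype ι]

def leeWeight (x : ι → ZMod 4) : ℕ := ∑ i, leeWt (x i)

theorem dLee_eq_leeWeight_sub (u c : ι → ZMod 4) : dLee u c = leeWeight (u - c) := rfl

theorem leeWeight_eq_zero_iff {x : ι → ZMod 4} : leeWeight x = 0 ↔ x = 0 := by
  simp [leeWeight, Finset.sum_eq_zero_iff, leeWt_eq_zero_iff, funext_iff]

theorem sum_two_sub_leeWt (y : ι → ZMod 4) :
    ∑ i, (2 - leeWt (y i)) = 2 * Fintype.card ι - leeWeight y := by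
  rw [Finset.sum_tsub_distrib _ fun i _ => leeWt_le_two (y i), Finset.sum_const, smul_eq_mul,
    mul_comm, Finset.card_univ, leeWeight]

variable [DecidableEq ι]

theorem sum_monomial_leeWeight_leeChar (y : ι → ZMod 4) :
    ∑ v, monomial (leeWeight v) (leeChar (y ⬝ᵥ v)) =
      (1 + X) ^ (2 * Fintype.card ι - leeWeight y) * (1 - X) ^ leeWeight y := by
  calc ∑ v, monomial (leeWeight v) (leeChar (y ⬝ᵥ v))
      = ∑ v : ι → ZMod 4, ∏ i, C (leeChar (y i * v i)) * (X : ℂ[X]) ^ leeWt (v i) := by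
        refine Finset.sum_congr rfl fun v _ => ?_
        rw [← C_mul_X_pow_eq_monomial, Finset.prod_mul_distrib, ← map_prod,
          ← AddChar.map_finsetSum, Finset.prod_pow_eq_pow_sum, dotProduct, leeWeight]
    _ = ∏ i, ∑ a, C (leeChar (y i * a)) * (X : ℂ[X]) ^ leeWt a := by
        rw [Finset.prod_univ_sum, Fintype.piFinset_univ]
    _ = ∏ i, (1 + X) ^ (2 - leeWt (y i)) * (1 - X) ^ leeWt (y i) := by
        simp only [sum_leeChar_mul_X_pow_leeWt]
    _ = _ := by
        rw [Finset.prod_mul_distrib, Finset.prod_pow_eq_pow_sum, Finset.prod_pow_eq_pow_sum,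
          sum_two_sub_leeWt, leeWeight]

theorem sum_leeWeight_pow_mul_leeChar_eq_zero (y : ι → ZMod 4) {k : ℕ} (hk : k < leeWeight y) :
    ∑ v, (leeWeight v : ℂ) ^ k * leeChar (y ⬝ᵥ v) = 0 := by
  have h := congrArg (fun p => ((eulerOp ℂ ^ k) p).eval 1) (sum_monomial_leeWeight_leeChar y)
  simp only [map_sum, eulerOp_pow_monomial, eval_finsetSum, eval_monomial, one_pow,
    mul_one] at h
  rw [h]
  exact eval_one_eulerOp_pow_eq_zero hk (dvd_mul_left _ _)

theorem sum_eval_leeWeight_mul_leeChar_eq_zero (y : ι → ZMod 4) {α : ℂ[X]}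
    (hα : α.natDegree < leeWeight y) :
    ∑ v, α.eval (leeWeight v : ℂ) * leeChar (y ⬝ᵥ v) = 0 := by
  simp_rw [eval_eq_sum_range, Finset.sum_mul, mul_assoc]
  rw [Finset.sum_comm]
  refine Finset.sum_eq_zero fun k hk => ?_
  rw [← Finset.mul_sum, sum_leeWeight_pow_mul_leeChar_eq_zero y, mul_zero]
  exact (Finset.mem_range_succ_iff.mp hk).trans_lt hα

end LeeWeight

section Code

variable {ι : Type*} [Fintype ι]

theorem sum_leeChar_dotProduct_eq_zero (C : Submodule (ZMod 4) (ι → ZMod 4)) [Fintype C]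
    {v : ι → ZMod 4} (hv : v ∉ dualCode (C : Set (ι → ZMod 4))) :
    ∑ c : C, leeChar ((c : ι → ZMod 4) ⬝ᵥ v) = 0 := by
  let ψ : AddChar C ℂ := leeChar.compAddMonoidHom
    (AddMonoidHom.mk' (fun c : C => (c : ι → ZMod 4) ⬝ᵥ v) fun a b => add_dotProduct _ _ _)
  refine (AddChar.sum_eq_zero_iff_ne_zero (ψ := ψ)).mpr (AddChar.ne_one_iff.mpr ?_)
  obtain ⟨c, hc, hcv⟩ : ∃ c ∈ C, v ⬝ᵥ c ≠ 0 := by simpa [dualCode, dotProduct] using hv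
  exact ⟨⟨c, hc⟩, (leeChar_eq_one_iff (c ⬝ᵥ v)).not.mpr (dotProduct_comm v c ▸ hcv)⟩

theorem exists_dLee_le_natDegree (C : Submodule (ZMod 4) (ι → ZMod 4))
    {α : ℂ[X]} (hα0 : α.eval 0 ≠ 0)
    (hα : ∀ x ∈ dualCode (C : Set (ι → ZMod 4)), x ≠ 0 → α.eval (leeWeight x : ℂ) = 0)
    (u : ι → ZMod 4) : ∃ c ∈ C, dLee u c ≤ α.natDegree := by
  classical
  by_contra! hfar
  have hzero :
      ∑ c : C, ∑ v, α.eval (leeWeight v : ℂ) * leeChar ((u + (c : ι → ZMod 4)) ⬝ᵥ v) = 0 :=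
    Finset.sum_eq_zero fun c _ => sum_eval_leeWeight_mul_leeChar_eq_zero _ <| by
      simpa [dLee_eq_leeWeight_sub] using hfar (-c) (neg_mem c.2)
  have hterm : ∀ v, v ≠ 0 →
      α.eval (leeWeight v : ℂ) * leeChar (u ⬝ᵥ v) *
        ∑ c : C, leeChar ((c : ι → ZMod 4) ⬝ᵥ v) = 0 := by
    intro v hv0
    by_cases hv : v ∈ dualCode (C : Set (ι → ZMod 4))
    · rw [hα v hv hv0, zero_mul, zero_mul]
    · rw [sum_leeChar_dotProduct_eq_zero C hv, mul_zero]
  rw [Finset.sum_comm] at hzero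
  simp_rw [add_dotProduct, AddChar.map_add_eq_mul, ← mul_assoc, ← Finset.mul_sum] at hzero
  rw [Finset.sum_eq_single 0 (fun v _ hv0 => hterm v hv0) (by simp)] at hzero
  simp [leeWeight_eq_zero_iff.mpr rfl, hα0] at hzero

theorem covRadLee_le {C : Set (ι → ZMod 4)} {r : ℕ} (h : ∀ u, ∃ c ∈ C, dLee u c ≤ r) :
    covRadLee C ≤ r := by
  refine csSup_le (Set.range_nonempty _) ?_
  rintro _ ⟨u, rfl⟩
  obtain ⟨c, hc, hcu⟩ := h u
  exact (Nat.sInf_le (Set.mem_image_of_mem _ hc)).trans hcu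

end Code

/-- Delsarte bound: the Lee covering radius of `C` is at most the number of distinct
nonzero Lee weights occurring among codewords of the dual code `C⊥`. -/
theorem stmt3 (n : ℕ) (C : Submodule (ZMod 4) (Fin n → ZMod 4)) :
    covRadLee (C : Set (Fin n → ZMod 4)) ≤
      Set.ncard {i : ℕ | i ≠ 0 ∧
        ∃ x ∈ dualCode (C : Set (Fin n → ZMod 4)), (∑ j, leeWt (x j)) = i} := by
  let D := {i : ℕ | i ≠ 0 ∧ ∃ x ∈ dualCode (C : Set (Fin n → ZMod 4)), leeWeight x = i}
  show covRadLee _ ≤ D.ncard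
  have hD : D.Finite := (Set.finite_range leeWeight).subset fun i ⟨_, x, _, hx⟩ => ⟨x, hx⟩
  let α : ℂ[X] := ∏ d ∈ hD.toFinset, (X - Polynomial.C (d : ℂ))
  have hα0 : α.eval 0 ≠ 0 := by simp [α, eval_prod, Finset.prod_eq_zero_iff, D]
  have hα : ∀ x ∈ dualCode (C : Set (Fin n → ZMod 4)), x ≠ 0 → α.eval (leeWeight x : ℂ) = 0 :=
    fun x hx hx0 => by
      rw [eval_prod]
      refine Finset.prod_eq_zero (i := leeWeight x) (hD.mem_toFinset.mpr ?_) (by simp)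
      exact ⟨leeWeight_eq_zero_iff.not.mpr hx0, x, hx, rfl⟩
  have hdeg : α.natDegree = D.ncard := by
    rw [natDegree_finsetProd_X_sub_C_eq_card, Set.ncard_eq_toFinset_card D hD]
  exact hdeg ▸ covRadLee_le (exists_dLee_le_natDegree C hα0 hα)
end

section
/- (Mattson upper bound) Let s ≥ 2, let w : Z_{2^s} → ℕ be any function with w(0)=0, and let d be the induced distance on tuples over Z_{2^s}, d(x,y) = Σ_i w(x_i − y_i). Let C0 be a linear code of length m over Z_{2^s}, C1 a linear code of length n over Z_{2^s}, and C a linear code of length m+n over Z_{2^s} such that: (i) for every c1 in C1 the vector (0,...,0, c1) (zeros in the first m coordinates) belongs to C, and (ii) the projection of C onto the first m coordinates equals C0. Then r_d(C) ≤ r_d(C0) + r_d(C1). -/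
/-- The distance on tuples over `ZMod (2^s)` induced by a weight `w`:
`d(x, y) = ∑ i, w (x i - y i)`. -/
def dW {s n : ℕ} (w : ZMod (2 ^ s) → ℕ) (x y : Fin n → ZMod (2 ^ s)) : ℕ :=
  ∑ i, w (x i - y i)

/-- The covering radius of a code over `ZMod (2^s)` with respect to the distance
induced by the weight `w`. -/
noncomputable def covRadW {s n : ℕ} (w : ZMod (2 ^ s) → ℕ)
    (C : Set (Fin n → ZMod (2 ^ s))) : ℕ :=
  sSup (Set.range fun u : Fin n → ZMod (2 ^ s) => sInf (dW w u '' C))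

lemma bdd_aux {s k : ℕ} (hs : 1 ≤ s) (w : ZMod (2 ^ s) → ℕ)
    (D : Set (Fin k → ZMod (2 ^ s))) (h0 : (0 : Fin k → ZMod (2 ^ s)) ∈ D) :
    BddAbove (Set.range fun u : Fin k → ZMod (2 ^ s) => sInf (dW w u '' D)) := by
  haveI : NeZero (2 ^ s) := ⟨by positivity⟩
  refine ⟨k * Finset.univ.sup w, ?_⟩
  rintro _ ⟨u, rfl⟩
  calc sInf (dW w u '' D) ≤ dW w u 0 := Nat.sInf_le ⟨0, h0, rfl⟩
    _ ≤ ∑ _i : Fin k, Finset.univ.sup w := by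
        refine Finset.sum_le_sum fun i _ => ?_
        exact Finset.le_sup (Finset.mem_univ _)
    _ = k * Finset.univ.sup w := by simp [Finset.sum_const, mul_comm]

lemma exists_close {s k : ℕ} (hs : 1 ≤ s) (w : ZMod (2 ^ s) → ℕ)
    (D : Set (Fin k → ZMod (2 ^ s))) (h0 : (0 : Fin k → ZMod (2 ^ s)) ∈ D)
    (u : Fin k → ZMod (2 ^ s)) :
    ∃ c ∈ D, dW w u c ≤ covRadW w D := by
  have hne : (dW w u '' D).Nonempty := ⟨dW w u 0, 0, h0, rfl⟩
  obtain ⟨c, hc, hceq⟩ := Nat.sInf_mem hne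
  refine ⟨c, hc, ?_⟩
  rw [hceq]
  exact le_csSup (bdd_aux hs w D h0) (Set.mem_range_self u)

/-- Mattson upper bound: if every vector `(0,…,0,c₁)` with `c₁ ∈ C₁` lies in `C`, and
the projection of `C` onto the first `m` coordinates is `C₀`, then
`r_d(C) ≤ r_d(C₀) + r_d(C₁)`. -/
theorem stmt4 (s m n : ℕ) (hs : 2 ≤ s)
    (w : ZMod (2 ^ s) → ℕ) (hw : w 0 = 0)
    (C0 : Submodule (ZMod (2 ^ s)) (Fin m → ZMod (2 ^ s)))
    (C1 : Submodule (ZMod (2 ^ s)) (Fin n → ZMod (2 ^ s)))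
    (C : Submodule (ZMod (2 ^ s)) (Fin (m + n) → ZMod (2 ^ s)))
    (h1 : ∀ c1 ∈ C1, Fin.append (0 : Fin m → ZMod (2 ^ s)) c1 ∈ C)
    (h2 : (fun x : Fin (m + n) → ZMod (2 ^ s) => fun i : Fin m => x (Fin.castAdd n i)) ''
        (C : Set (Fin (m + n) → ZMod (2 ^ s))) = (C0 : Set (Fin m → ZMod (2 ^ s)))) :
    covRadW w (C : Set (Fin (m + n) → ZMod (2 ^ s))) ≤
      covRadW w (C0 : Set (Fin m → ZMod (2 ^ s))) +
        covRadW w (C1 : Set (Fin n → ZMod (2 ^ s))) := by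
  have hs1 : 1 ≤ s := le_trans one_le_two hs
  refine csSup_le (Set.range_nonempty _) ?_
  rintro _ ⟨u, rfl⟩
  -- project u onto first m coordinates
  set u0 : Fin m → ZMod (2 ^ s) := fun i => u (Fin.castAdd n i) with hu0
  obtain ⟨c0, hc0, hd0⟩ := exists_close hs1 w (C0 : Set _) C0.zero_mem u0
  -- lift c0 to x ∈ C
  have hc0' : c0 ∈ (fun x : Fin (m + n) → ZMod (2 ^ s) =>
      fun i : Fin m => x (Fin.castAdd n i)) '' (C : Set _) := by rw [h2]; exact hc0
  obtain ⟨x, hx, hxc0⟩ := hc0'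
  set u1 : Fin n → ZMod (2 ^ s) := fun j => u (Fin.natAdd m j) - x (Fin.natAdd m j) with hu1
  obtain ⟨c1, hc1, hd1⟩ := exists_close hs1 w (C1 : Set _) C1.zero_mem u1
  set c : Fin (m + n) → ZMod (2 ^ s) := x + Fin.append (0 : Fin m → ZMod (2 ^ s)) c1 with hc
  have hcC : c ∈ (C : Set _) := C.add_mem hx (h1 c1 hc1)
  have hdc : dW w u c = dW w u0 c0 + dW w u1 c1 := by
    unfold dW
    rw [Fin.sum_univ_add]
    congr 1
    · refine Finset.sum_congr rfl fun i _ => ?_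
      have : c (Fin.castAdd n i) = x (Fin.castAdd n i) := by
        simp [hc, Fin.append_left, Pi.zero_apply]
      rw [this, ← hxc0]
    · refine Finset.sum_congr rfl fun j _ => ?_
      have : c (Fin.natAdd m j) = x (Fin.natAdd m j) + c1 j := by
        simp [hc, Fin.append_right]
      rw [this, hu1]
      ring_nf
  refine le_trans (Nat.sInf_le ⟨c, hcC, rfl⟩) ?_
  rw [hdc]
  exact add_le_add hd0 hd1
end

section
/- Let n be a positive even integer and let C_α ⊆ Z4^n be the Z4-submodule generated by the all-twos vector (2,2,...,2), so C_α = {(0,...,0), (2,...,2)}. Then the Euclidean covering radius satisfies r_E(C_α) = 2n. -/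
lemma euclWt_add_euclWt_sub_two_le (x : ZMod 4) : euclWt x + euclWt (x - 2) ≤ 4 := by
  decide +revert

lemma Submodule.coe_span_singleton_eq_pair_of_two_smul {M : Type*} [AddCommGroup M]
    [Module (ZMod 4) M] {x : M} (hx : (2 : ZMod 4) • x = 0) :
    (Submodule.span (ZMod 4) {x} : Set M) = {0, x} := by
  have hx3 : (3 : ZMod 4) • x = x := by
    rw [show (3 : ZMod 4) = 2 + 1 from rfl, add_smul, hx, one_smul, zero_add]
  ext y
  simp only [SetLike.mem_coe, Submodule.mem_span_singleton, Set.mem_insert_iff,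
    Set.mem_singleton_iff]
  constructor
  · rintro ⟨c, rfl⟩
    fin_cases c
    · exact Or.inl (zero_smul _ x)
    · exact Or.inr (one_smul _ x)
    · exact Or.inl hx
    · exact Or.inr hx3
  · rintro (rfl | rfl)
    · exact ⟨0, zero_smul _ _⟩
    · exact ⟨1, one_smul _ _⟩

section Fintype

variable {ι : Type*} [Fintype ι]

lemma sInf_dEucl_image_pair (u a b : ι → ZMod 4) :
    sInf (dEucl u '' {a, b}) = min (dEucl u a) (dEucl u b) := by
  rw [Set.image_pair, csInf_pair]

lemma dEucl_zero_add_dEucl_two_le (u : ι → ZMod 4) :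
    dEucl u 0 + dEucl u (fun _ => 2) ≤ 4 * Fintype.card ι := by
  unfold dEucl
  rw [← Finset.sum_add_distrib]
  calc _ ≤ ∑ _i : ι, 4 := Finset.sum_le_sum fun i _ => by
          simpa using euclWt_add_euclWt_sub_two_le (u i)
    _ = 4 * Fintype.card ι := by simp [mul_comm]

lemma dEucl_ite_two_zero [DecidableEq ι] (s : Finset ι) :
    dEucl (fun i => if i ∈ s then 2 else 0) 0 = 4 * s.card := by
  have hwt : ∀ i, euclWt ((if i ∈ s then 2 else 0) - 0) = if i ∈ s then 4 else 0 := by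
    intro i; split_ifs <;> rfl
  simp only [dEucl, Pi.zero_apply]
  rw [Finset.sum_congr rfl fun i _ => hwt i, Finset.sum_ite_mem, Finset.univ_inter,
    Finset.sum_const, smul_eq_mul, mul_comm]

lemma dEucl_ite_two_two [DecidableEq ι] (s : Finset ι) :
    dEucl (fun i => if i ∈ s then 2 else 0) (fun _ => 2) = 4 * sᶜ.card := by
  have hwt : ∀ i, euclWt ((if i ∈ s then 2 else 0) - 2) = if i ∈ sᶜ then 4 else 0 := by
    intro i; simp only [Finset.mem_compl]; split_ifs <;> rfl
  rw [dEucl, Finset.sum_congr rfl fun i _ => hwt i, Finset.sum_ite_mem, Finset.univ_inter,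
    Finset.sum_const, smul_eq_mul, mul_comm]

lemma sInf_dEucl_image_zero_two_le (u : ι → ZMod 4) :
    sInf (dEucl u '' {0, fun _ => 2}) ≤ 2 * Fintype.card ι := by
  rw [sInf_dEucl_image_pair]
  have := dEucl_zero_add_dEucl_two_le u
  omega

lemma covRadEucl_zero_two_le :
    covRadEucl ({0, fun _ => 2} : Set (ι → ZMod 4)) ≤ 2 * Fintype.card ι :=
  csSup_le (Set.range_nonempty _) (Set.forall_mem_range.2 sInf_dEucl_image_zero_two_le)

lemma le_covRadEucl_zero_two (h : Even (Fintype.card ι)) :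
    2 * Fintype.card ι ≤ covRadEucl ({0, fun _ => 2} : Set (ι → ZMod 4)) := by
  classical
  obtain ⟨k, hk⟩ := h
  obtain ⟨s, -, hs⟩ := Finset.exists_subset_card_eq (s := (Finset.univ : Finset ι)) (n := k)
    (by rw [Finset.card_univ]; omega)
  have hsc : sᶜ.card = k := by rw [Finset.card_compl, hs]; omega
  refine le_csSup ⟨_, Set.forall_mem_range.2 sInf_dEucl_image_zero_two_le⟩
    ⟨fun i => if i ∈ s then 2 else 0, ?_⟩
  simp only [sInf_dEucl_image_pair, dEucl_ite_two_zero, dEucl_ite_two_two, hs, hsc]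
  omega

theorem covRadEucl_zero_two (h : Even (Fintype.card ι)) :
    covRadEucl ({0, fun _ => 2} : Set (ι → ZMod 4)) = 2 * Fintype.card ι :=
  le_antisymm covRadEucl_zero_two_le (le_covRadEucl_zero_two h)

end Fintype

theorem stmt8_general (n : ℕ) (hne : Even n)
    (Cα : Submodule (ZMod 4) (Fin n → ZMod 4))
    (hCα : Cα = Submodule.span (ZMod 4) {fun _ : Fin n => (2 : ZMod 4)}) :
    covRadEucl (Cα : Set (Fin n → ZMod 4)) = 2 * n := by
  have htwo : (2 : ZMod 4) • (fun _ : Fin n => (2 : ZMod 4)) = 0 := by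
    funext; exact rfl
  rw [hCα, Submodule.coe_span_singleton_eq_pair_of_two_smul htwo, covRadEucl_zero_two,
    Fintype.card_fin]
  rwa [Fintype.card_fin]

theorem stmt8 (n : ℕ) (hn : 0 < n) (hne : Even n)
    (Cα : Submodule (ZMod 4) (Fin n → ZMod 4))
    (hCα : Cα = Submodule.span (ZMod 4) {fun _ : Fin n => (2 : ZMod 4)}) :
    covRadEucl (Cα : Set (Fin n → ZMod 4)) = 2 * n :=
  stmt8_general n hne Cα hCα
end

section
/- Let n be a positive even integer and let C_β ⊆ Z4^n be the Z4-submodule generated by the all-ones vector (1,1,...,1), so C_β consists of the four constant vectors over Z4. Then the Lee covering radius satisfies r_L(C_β) = n. -/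
lemma lee_pair : ∀ a : ZMod 4, leeWt a + leeWt (a - 2) = 2 := by decide

lemma lee_pair' : ∀ a : ZMod 4, leeWt (0 - a) + leeWt (2 - a) = 2 := by decide

theorem stmt9 (n : ℕ) (hn : 0 < n) (hne : Even n)
    (Cβ : Submodule (ZMod 4) (Fin n → ZMod 4))
    (hCβ : Cβ = Submodule.span (ZMod 4) {fun _ : Fin n => (1 : ZMod 4)}) :
    covRadLee (Cβ : Set (Fin n → ZMod 4)) = n := by
  obtain ⟨m, hm⟩ := hne
  have hmem : ∀ x : Fin n → ZMod 4, x ∈ Cβ ↔ ∃ a : ZMod 4, x = fun _ => a := by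
    intro x
    rw [hCβ, Submodule.mem_span_singleton]
    constructor
    · rintro ⟨a, rfl⟩
      exact ⟨a, by funext i; simp⟩
    · rintro ⟨a, rfl⟩
      exact ⟨a, by funext i; simp⟩
  -- every point is within n of the code
  have hub : ∀ u : Fin n → ZMod 4, sInf (dLee u '' (Cβ : Set (Fin n → ZMod 4))) ≤ n := by
    intro u
    have h0 : (fun _ : Fin n => (0 : ZMod 4)) ∈ Cβ := (hmem _).2 ⟨0, rfl⟩
    have h2 : (fun _ : Fin n => (2 : ZMod 4)) ∈ Cβ := (hmem _).2 ⟨2, rfl⟩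
    have hA : sInf (dLee u '' (Cβ : Set (Fin n → ZMod 4))) ≤ dLee u (fun _ => 0) :=
      Nat.sInf_le ⟨_, h0, rfl⟩
    have hB : sInf (dLee u '' (Cβ : Set (Fin n → ZMod 4))) ≤ dLee u (fun _ => 2) :=
      Nat.sInf_le ⟨_, h2, rfl⟩
    have hsum : dLee u (fun _ => 0) + dLee u (fun _ => 2) = 2 * n := by
      unfold dLee
      rw [← Finset.sum_add_distrib]
      have : ∀ i : Fin n, leeWt (u i - 0) + leeWt (u i - 2) = 2 := by
        intro i
        have := lee_pair (u i)
        simpa using this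
      calc ∑ i : Fin n, (leeWt (u i - 0) + leeWt (u i - 2)) = ∑ _i : Fin n, 2 :=
            Finset.sum_congr rfl fun i _ => this i
        _ = 2 * n := by simp [Finset.card_univ, mul_comm]
    omega
  apply le_antisymm
  · exact csSup_le ⟨_, Set.mem_range_self (fun _ => 0)⟩ (by rintro b ⟨u, rfl⟩; exact hub u)
  · -- lower bound via u₀
    set u₀ : Fin n → ZMod 4 := fun i => if (i : ℕ) < m then 0 else 2 with hu₀
    have hdist : ∀ a : ZMod 4, dLee u₀ (fun _ => a) = n := by
      intro a
      unfold dLee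
      have : ∀ i : Fin n, leeWt (u₀ i - a) =
          if (i : ℕ) < m then leeWt (0 - a) else leeWt (2 - a) := by
        intro i
        by_cases h : (i : ℕ) < m <;> simp [hu₀, h]
      rw [Finset.sum_congr rfl fun i _ => this i]
      rw [Finset.sum_ite, Finset.sum_const, Finset.sum_const]
      have hmn : m < n := by omega
      have hcard1 : (Finset.univ.filter fun i : Fin n => (i : ℕ) < m).card = m := by
        have : (Finset.univ.filter fun i : Fin n => (i : ℕ) < m) =
            Finset.Iio (⟨m, hmn⟩ : Fin n) := by
          ext i; simp [Fin.lt_def]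
        rw [this, Fin.card_Iio]
      have hcard2 : (Finset.univ.filter fun i : Fin n => ¬ (i : ℕ) < m).card = m := by
        have := Finset.card_filter_add_card_filter_not
          (s := (Finset.univ : Finset (Fin n))) (p := fun i : Fin n => (i : ℕ) < m)
        rw [Finset.card_univ, Fintype.card_fin] at this
        omega
      rw [hcard1, hcard2, smul_eq_mul, smul_eq_mul, ← Nat.mul_add, lee_pair' a]
      omega
    have hbdd : BddAbove (Set.range fun u : Fin n → ZMod 4 =>
        sInf (dLee u '' (Cβ : Set (Fin n → ZMod 4)))) := by
      refine ⟨n, ?_⟩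
      rintro b ⟨u, rfl⟩
      exact hub u
    have h1 : (n : ℕ) ≤ sInf (dLee u₀ '' (Cβ : Set (Fin n → ZMod 4))) := by
      apply le_csInf
      · exact ⟨_, ⟨(fun _ => 0), (hmem _).2 ⟨0, rfl⟩, rfl⟩⟩
      · rintro b ⟨x, hx, rfl⟩
        obtain ⟨a, rfl⟩ := (hmem x).1 hx
        rw [hdist a]
    exact h1.trans (le_csSup hbdd ⟨u₀, rfl⟩)
end

section
/- Let n be a positive integer divisible by 4 and let C_β ⊆ Z4^n be the Z4-submodule generated by the all-ones vector (1,1,...,1), so C_β consists of the four constant vectors over Z4. Then the Euclidean covering radius satisfies 2·r_E(C_β) = 3n (i.e. r_E(C_β) = 3n/2). -/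
lemma euclWt_sum4 : ∀ a : ZMod 4,
    euclWt (a - 0) + euclWt (a - 1) + euclWt (a - 2) + euclWt (a - 3) = 6 := by decide

lemma euclWt_sum4' : ∀ c : ZMod 4,
    euclWt (0 - c) + euclWt (1 - c) + euclWt (2 - c) + euclWt (3 - c) = 6 := by decide

lemma sum_mod4 (m : ℕ) (f : ZMod 4 → ℕ) :
    ∑ i ∈ Finset.range (4*m), f (i : ZMod 4) = m * (f 0 + f 1 + f 2 + f 3) := by
  induction m with
  | zero => simp
  | succ k ih =>
    have h4 : 4 * (k+1) = 4*k + 1 + 1 + 1 + 1 := by ring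
    rw [h4, Finset.sum_range_succ, Finset.sum_range_succ, Finset.sum_range_succ,
      Finset.sum_range_succ, ih]
    have h40 : (4 : ZMod 4) = 0 := rfl
    have e0 : ((4*k : ℕ) : ZMod 4) = 0 := by push_cast; rw [h40]; ring
    have e1 : ((4*k + 1 : ℕ) : ZMod 4) = 1 := by push_cast; rw [h40]; ring
    have e2 : ((4*k + 1 + 1 : ℕ) : ZMod 4) = 2 := by push_cast; rw [h40]; ring
    have e3 : ((4*k + 1 + 1 + 1 : ℕ) : ZMod 4) = 3 := by push_cast; rw [h40]; ring
    rw [e0, e1, e2, e3]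
    ring

theorem stmt10 (n : ℕ) (hn : 0 < n) (hn4 : 4 ∣ n)
    (Cβ : Submodule (ZMod 4) (Fin n → ZMod 4))
    (hCβ : Cβ = Submodule.span (ZMod 4) {fun _ : Fin n => (1 : ZMod 4)}) :
    2 * covRadEucl (Cβ : Set (Fin n → ZMod 4)) = 3 * n := by
  obtain ⟨m, rfl⟩ := hn4
  subst hCβ
  set C : Set (Fin (4*m) → ZMod 4) :=
    ((Submodule.span (ZMod 4) {fun _ : Fin (4*m) => (1 : ZMod 4)} :
      Submodule (ZMod 4) (Fin (4*m) → ZMod 4)) : Set (Fin (4*m) → ZMod 4))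
  have hmemC : ∀ c : ZMod 4, (fun _ : Fin (4*m) => c) ∈ C := by
    intro c
    exact Submodule.mem_span_singleton.2 ⟨c, by funext i; simp⟩
  have hC : ∀ x ∈ C, ∃ c : ZMod 4, x = fun _ => c := by
    intro x hx
    obtain ⟨c, hc⟩ := Submodule.mem_span_singleton.1 hx
    exact ⟨c, by rw [← hc]; funext i; simp⟩
  -- upper bound: each sInf ≤ 6*m
  have hub : ∀ u : Fin (4*m) → ZMod 4, sInf (dEucl u '' C) ≤ 6 * m := by
    intro u
    have hle : ∀ c : ZMod 4, sInf (dEucl u '' C) ≤ dEucl u (fun _ => c) := fun c =>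
      Nat.sInf_le ⟨_, hmemC c, rfl⟩
    have hsum : dEucl u (fun _ => (0:ZMod 4)) + dEucl u (fun _ => 1) +
        dEucl u (fun _ => 2) + dEucl u (fun _ => 3) = 24 * m := by
      simp only [dEucl, ← Finset.sum_add_distrib]
      have : ∀ i : Fin (4*m), euclWt (u i - 0) + euclWt (u i - 1) + euclWt (u i - 2)
          + euclWt (u i - 3) = 6 := fun i => euclWt_sum4 (u i)
      rw [Finset.sum_congr rfl fun i _ => this i]
      simp [Finset.card_univ, mul_comm]
      ring
    have h0 := hle 0; have h1 := hle 1; have h2 := hle 2; have h3 := hle 3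
    omega
  -- the special vector achieving 6*m
  have hspec : sInf (dEucl (fun i : Fin (4*m) => ((i : ℕ) : ZMod 4)) '' C) = 6 * m := by
    have hval : ∀ c : ZMod 4,
        dEucl (fun i : Fin (4*m) => ((i : ℕ) : ZMod 4)) (fun _ => c) = 6 * m := by
      intro c
      have : dEucl (fun i : Fin (4*m) => ((i : ℕ) : ZMod 4)) (fun _ => c)
          = ∑ i ∈ Finset.range (4*m), euclWt (((i : ℕ) : ZMod 4) - c) :=
        Fin.sum_univ_eq_sum_range (fun k => euclWt (((k : ℕ) : ZMod 4) - c)) (4*m)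
      rw [this, sum_mod4 m (fun a => euclWt (a - c)), euclWt_sum4' c]
      ring
    apply le_antisymm
    · have h6 : (6*m) ∈ dEucl (fun i : Fin (4*m) => ((i : ℕ) : ZMod 4)) '' C :=
        ⟨_, hmemC 0, hval 0⟩
      exact Nat.sInf_le h6
    · refine le_csInf
        ⟨dEucl (fun i : Fin (4*m) => ((i : ℕ) : ZMod 4)) (fun _ => 0), ⟨_, hmemC 0, rfl⟩⟩ ?_
      rintro b ⟨x, hx, rfl⟩
      obtain ⟨c, rfl⟩ := hC x hx
      exact (hval c).ge
  have hbdd : BddAbove (Set.range fun u : Fin (4*m) → ZMod 4 => sInf (dEucl u '' C)) := by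
    exact ⟨6*m, by rintro x ⟨u, rfl⟩; exact hub u⟩
  have hsup : covRadEucl C = 6 * m := by
    apply le_antisymm
    · exact csSup_le ⟨_, ⟨0, rfl⟩⟩ (by rintro x ⟨u, rfl⟩; exact hub u)
    · calc 6*m = sInf (dEucl (fun i : Fin (4*m) => ((i : ℕ) : ZMod 4)) '' C) := hspec.symm
        _ ≤ _ := le_csSup hbdd ⟨_, rfl⟩
  rw [hsup]; ring
end

section
/- Let n ≥ 1 and let BRep^{3n}_α ⊆ Z4^{3n} be the Z4-submodule generated by the vector g consisting of n ones followed by n twos followed by n threes, so BRep^{3n}_α = {0, g, 2g, 3g}. Then the Lee covering radius satisfies r_L(BRep^{3n}_α) = 3n. -/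
set_option maxHeartbeats 1000000


lemma key4 : ∀ a b : ZMod 4, (b = 1 ∨ b = 2 ∨ b = 3) →
    leeWt (a - 0 * b) + leeWt (a - 1 * b) + leeWt (a - 2 * b) + leeWt (a - 3 * b) = 4 := by
  decide

lemma key3 : ∀ a : ZMod 4,
    leeWt (1 - a * 1) + leeWt (1 - a * 2) + leeWt (1 - a * 3) = 3 := by
  decide

theorem stmt11 (n : ℕ) (hn : 1 ≤ n)
    (g : Fin (3 * n) → ZMod 4)
    (hg : g = fun (j : Fin (3 * n)) => if (j : ℕ) < n then 1 else if (j : ℕ) < 2 * n then 2 else 3)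
    (BRep : Submodule (ZMod 4) (Fin (3 * n) → ZMod 4))
    (hB : BRep = Submodule.span (ZMod 4) {g}) :
    covRadLee (BRep : Set (Fin (3 * n) → ZMod 4)) = 3 * n := by
  have hgvals : ∀ i, g i = 1 ∨ g i = 2 ∨ g i = 3 := by
    subst hg; intro i; dsimp only
    split_ifs <;> tauto
  have hmem : ∀ a : ZMod 4, a • g ∈ BRep := by
    intro a; rw [hB]
    exact Submodule.smul_mem _ a (Submodule.mem_span_singleton_self g)
  -- distance formula
  have hd : ∀ (u : Fin (3*n) → ZMod 4) (a : ZMod 4),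
      dLee u (a • g) = ∑ i, leeWt (u i - a * g i) := by
    intro u a; simp [dLee]
  -- upper bound: every point is within 3n of the code
  have hub : ∀ u : Fin (3*n) → ZMod 4, sInf (dLee u '' (BRep : Set _)) ≤ 3 * n := by
    intro u
    have hle : ∀ a : ZMod 4, sInf (dLee u '' (BRep : Set _)) ≤ ∑ i, leeWt (u i - a * g i) := by
      intro a
      exact Nat.sInf_le ⟨a • g, hmem a, hd u a⟩
    have hsum : (∑ i, leeWt (u i - 0 * g i)) + (∑ i, leeWt (u i - 1 * g i))
        + (∑ i, leeWt (u i - 2 * g i)) + (∑ i, leeWt (u i - 3 * g i)) = 12 * n := by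
      rw [← Finset.sum_add_distrib, ← Finset.sum_add_distrib, ← Finset.sum_add_distrib]
      have : ∀ i ∈ Finset.univ, leeWt (u i - 0 * g i) + leeWt (u i - 1 * g i)
          + leeWt (u i - 2 * g i) + leeWt (u i - 3 * g i) = 4 := by
        intro i _; exact key4 (u i) (g i) (hgvals i)
      rw [Finset.sum_congr rfl this, Finset.sum_const, Finset.card_univ, Fintype.card_fin,
        smul_eq_mul]
      ring
    have h0 := hle 0; have h1 := hle 1; have h2 := hle 2; have h3 := hle 3
    omega
  -- the all-ones vector is at distance exactly 3n from every codeword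
  have hone : ∀ c ∈ (BRep : Set (Fin (3*n) → ZMod 4)), dLee (fun _ => 1) c = 3 * n := by
    intro c hc
    rw [hB, SetLike.mem_coe, Submodule.mem_span_singleton] at hc
    obtain ⟨a, rfl⟩ := hc
    rw [hd]
    subst hg
    have hfin : (∑ i : Fin (3*n), leeWt ((1 : ZMod 4) - a *
        (if (i : ℕ) < n then 1 else if (i : ℕ) < 2 * n then 2 else 3)))
        = ∑ j ∈ Finset.range (3*n), leeWt ((1 : ZMod 4) - a *
        (if j < n then 1 else if j < 2 * n then 2 else 3)) :=
      Fin.sum_univ_eq_sum_range (fun j => leeWt ((1 : ZMod 4) - a *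
        (if j < n then 1 else if j < 2 * n then 2 else 3))) (3*n)
    rw [hfin]
    rw [Finset.range_eq_Ico,
      ← Finset.sum_Ico_consecutive _ (Nat.zero_le (2*n)) (by omega : 2*n ≤ 3*n),
      ← Finset.sum_Ico_consecutive _ (Nat.zero_le n) (by omega : n ≤ 2*n)]
    have e1 : ∑ j ∈ Finset.Ico 0 n, leeWt ((1 : ZMod 4) - a *
        (if j < n then 1 else if j < 2 * n then 2 else 3)) = n * leeWt (1 - a * 1) := by
      have h : ∀ j ∈ Finset.Ico 0 n, leeWt ((1 : ZMod 4) - a *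
          (if j < n then 1 else if j < 2 * n then 2 else 3)) = leeWt (1 - a * 1) := by
        intro j hj; rw [Finset.mem_Ico] at hj; rw [if_pos hj.2]
      rw [Finset.sum_congr rfl h, Finset.sum_const, Nat.card_Ico, smul_eq_mul]
      congr 1
    have e2 : ∑ j ∈ Finset.Ico n (2*n), leeWt ((1 : ZMod 4) - a *
        (if j < n then 1 else if j < 2 * n then 2 else 3)) = n * leeWt (1 - a * 2) := by
      have h : ∀ j ∈ Finset.Ico n (2*n), leeWt ((1 : ZMod 4) - a *
          (if j < n then 1 else if j < 2 * n then 2 else 3)) = leeWt (1 - a * 2) := by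
        intro j hj; rw [Finset.mem_Ico] at hj; rw [if_neg (by omega), if_pos hj.2]
      rw [Finset.sum_congr rfl h, Finset.sum_const, Nat.card_Ico, smul_eq_mul]
      congr 1; omega
    have e3 : ∑ j ∈ Finset.Ico (2*n) (3*n), leeWt ((1 : ZMod 4) - a *
        (if j < n then 1 else if j < 2 * n then 2 else 3)) = n * leeWt (1 - a * 3) := by
      have h : ∀ j ∈ Finset.Ico (2*n) (3*n), leeWt ((1 : ZMod 4) - a *
          (if j < n then 1 else if j < 2 * n then 2 else 3)) = leeWt (1 - a * 3) := by
        intro j hj; rw [Finset.mem_Ico] at hj; rw [if_neg (by omega), if_neg (by omega)]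
      rw [Finset.sum_congr rfl h, Finset.sum_const, Nat.card_Ico, smul_eq_mul]
      congr 1; omega
    rw [e1, e2, e3, ← Nat.left_distrib, ← Nat.left_distrib, key3 a]
    omega
  have hzero : (0 : Fin (3*n) → ZMod 4) ∈ (BRep : Set (Fin (3*n) → ZMod 4)) := by
    rw [hB]; exact Submodule.zero_mem _
  have hinf1 : sInf (dLee (fun _ => (1 : ZMod 4)) '' (BRep : Set (Fin (3*n) → ZMod 4))) = 3 * n := by
    apply le_antisymm
    · exact Nat.sInf_le ⟨0, hzero, hone 0 hzero⟩
    · refine le_csInf ⟨_, Set.mem_image_of_mem _ hzero⟩ ?_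
      rintro b ⟨c, hc, rfl⟩
      exact (hone c hc).ge
  unfold covRadLee
  apply le_antisymm
  · refine csSup_le (Set.range_nonempty _) ?_
    rintro x ⟨u, rfl⟩
    exact hub u
  · refine le_csSup ⟨3 * n, ?_⟩ ⟨fun _ => 1, hinf1⟩
    rintro x ⟨u, rfl⟩
    exact hub u
end

section
/- Let n be a positive even integer and let BRep^{3n}_α ⊆ Z4^{3n} be the Z4-submodule generated by the vector g consisting of n ones followed by n twos followed by n threes. Then the Euclidean covering radius satisfies 5n ≤ r_E(BRep^{3n}_α) and 2·r_E(BRep^{3n}_α) ≤ 11n. -/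
lemma key1 : ∀ x : ZMod 4, (∑ r : ZMod 4, euclWt (x - r * 1)) = 6 := by decide
lemma key2 : ∀ x : ZMod 4, (∑ r : ZMod 4, euclWt (x - r * 2)) ≤ 8 := by decide
lemma key3_s12 : ∀ x : ZMod 4, (∑ r : ZMod 4, euclWt (x - r * 3)) = 6 := by decide
lemma keyS : ∀ r : ZMod 4, euclWt (0 - r*1) + euclWt (2 - r*1) + euclWt (0 - r*2)
    + euclWt (2 - r*2) + euclWt (1 - r*3) + euclWt (3 - r*3) = 10 := by decide

lemma sum_Ico_const (f : ℕ → ℕ) (a b c : ℕ) (h : ∀ j, a ≤ j → j < b → f j = c) :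
    ∑ j ∈ Finset.Ico a b, f j = (b - a) * c := by
  rw [Finset.sum_congr rfl (fun j hj => h j (Finset.mem_Ico.mp hj).1 (Finset.mem_Ico.mp hj).2)]
  simp [Nat.card_Ico, mul_comm]

theorem stmt12 (n : ℕ) (hn : 0 < n) (hne : Even n)
    (g : Fin (3 * n) → ZMod 4)
    (hg : g = fun (j : Fin (3 * n)) => if (j : ℕ) < n then 1 else if (j : ℕ) < 2 * n then 2 else 3)
    (BRep : Submodule (ZMod 4) (Fin (3 * n) → ZMod 4))
    (hB : BRep = Submodule.span (ZMod 4) {g}) :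
    5 * n ≤ covRadEucl (BRep : Set (Fin (3 * n) → ZMod 4)) ∧
      2 * covRadEucl (BRep : Set (Fin (3 * n) → ZMod 4)) ≤ 11 * n := by
  obtain ⟨m, hm⟩ := hne
  subst hm
  have hCg : g ∈ BRep := hB ▸ Submodule.mem_span_singleton_self g
  have hmem : ∀ r : ZMod 4, r • g ∈ BRep := fun r => Submodule.smul_mem _ r hCg
  have hsur : ∀ c ∈ BRep, ∃ r : ZMod 4, r • g = c := fun c hc =>
    (Submodule.mem_span_singleton).mp (hB ▸ hc)
  -- Upper bound: for every u, sInf (dEucl u '' C) ≤ 5 * (m + m)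
  have upper : ∀ u : Fin (3 * (m + m)) → ZMod 4,
      sInf (dEucl u '' (BRep : Set _)) ≤ 5 * (m + m) := by
    intro u
    have h2 : 4 * sInf (dEucl u '' (BRep : Set _)) ≤ ∑ r : ZMod 4, dEucl u (r • g) := by
      calc 4 * sInf (dEucl u '' (BRep : Set _))
          = ∑ _r : ZMod 4, sInf (dEucl u '' (BRep : Set _)) := by
            simp [Finset.sum_const, ZMod.card]
        _ ≤ ∑ r : ZMod 4, dEucl u (r • g) :=
            Finset.sum_le_sum fun r _ => Nat.sInf_le ⟨r • g, hmem r, rfl⟩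
    have h3 : ∑ r : ZMod 4, dEucl u (r • g) ≤ 20 * (m + m) := by
      unfold dEucl
      rw [Finset.sum_comm]
      have hb : ∀ i : Fin (3 * (m + m)), (∑ r : ZMod 4, euclWt (u i - (r • g) i)) ≤
          (fun j : ℕ => if m + m ≤ j ∧ j < 2 * (m + m) then (8 : ℕ) else 6) (i : ℕ) := by
        intro i
        simp only [Pi.smul_apply, smul_eq_mul, hg]
        by_cases h1 : (i : ℕ) < m + m
        · rw [if_neg (by omega : ¬(m + m ≤ (i : ℕ) ∧ (i : ℕ) < 2 * (m + m)))]
          simp only [if_pos h1]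
          exact (key1 (u i)).le
        · by_cases h2' : (i : ℕ) < 2 * (m + m)
          · rw [if_pos (show m + m ≤ (i : ℕ) ∧ (i : ℕ) < 2 * (m + m) from ⟨by omega, h2'⟩)]
            simp only [if_neg h1, if_pos h2']
            exact key2 (u i)
          · rw [if_neg (by omega : ¬(m + m ≤ (i : ℕ) ∧ (i : ℕ) < 2 * (m + m)))]
            simp only [if_neg h1, if_neg h2']
            exact (key3_s12 (u i)).le
      calc ∑ i : Fin (3 * (m + m)), ∑ r : ZMod 4, euclWt (u i - (r • g) i)
          ≤ ∑ i : Fin (3 * (m + m)),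
              (fun j : ℕ => if m + m ≤ j ∧ j < 2 * (m + m) then (8 : ℕ) else 6) (i : ℕ) :=
            Finset.sum_le_sum fun i _ => hb i
        _ = ∑ j ∈ Finset.range (3 * (m + m)),
              (if m + m ≤ j ∧ j < 2 * (m + m) then (8 : ℕ) else 6) :=
            Fin.sum_univ_eq_sum_range
              (fun j : ℕ => if m + m ≤ j ∧ j < 2 * (m + m) then (8 : ℕ) else 6) (3 * (m + m))
        _ = 20 * (m + m) := by
            rw [Finset.range_eq_Ico,
              ← Finset.sum_Ico_consecutive _ (by omega : 0 ≤ 2 * (m + m))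
                (by omega : 2 * (m + m) ≤ 3 * (m + m)),
              ← Finset.sum_Ico_consecutive _ (by omega : 0 ≤ m + m)
                (by omega : m + m ≤ 2 * (m + m)),
              sum_Ico_const _ 0 (m + m) 6 (fun j h1 h2 => by rw [if_neg (by omega)]),
              sum_Ico_const _ (m + m) (2 * (m + m)) 8 (fun j h1 h2 => by
                rw [if_pos (by omega : m + m ≤ j ∧ j < 2 * (m + m))]),
              sum_Ico_const _ (2 * (m + m)) (3 * (m + m)) 6
                (fun j h1 h2 => by rw [if_neg (by omega)])]
            omega
    omega
  -- the special vector u0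
  set U : ℕ → ZMod 4 := fun j => if j < m then 0 else if j < 2 * m then 2 else
      if j < 3 * m then 0 else if j < 4 * m then 2 else if j < 5 * m then 1 else 3 with hU
  set G : ℕ → ZMod 4 := fun j =>
      if j < m + m then 1 else if j < 2 * (m + m) then 2 else 3 with hG
  set u0 : Fin (3 * (m + m)) → ZMod 4 := fun i => U (i : ℕ) with hu0
  have hlow : ∀ r : ZMod 4, dEucl u0 (r • g) = 5 * (m + m) := by
    intro r
    have hstep : dEucl u0 (r • g)
        = ∑ j ∈ Finset.range (3 * (m + m)), euclWt (U j - r * G j) := by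
      unfold dEucl
      rw [← Fin.sum_univ_eq_sum_range (fun j => euclWt (U j - r * G j)) (3 * (m + m))]
      refine Finset.sum_congr rfl fun i _ => ?_
      simp only [hu0, Pi.smul_apply, smul_eq_mul, hg, hG]
    rw [hstep, Finset.range_eq_Ico,
      ← Finset.sum_Ico_consecutive _ (by omega : 0 ≤ 5 * m) (by omega : 5 * m ≤ 3 * (m + m)),
      ← Finset.sum_Ico_consecutive _ (by omega : 0 ≤ 4 * m) (by omega : 4 * m ≤ 5 * m),
      ← Finset.sum_Ico_consecutive _ (by omega : 0 ≤ 3 * m) (by omega : 3 * m ≤ 4 * m),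
      ← Finset.sum_Ico_consecutive _ (by omega : 0 ≤ 2 * m) (by omega : 2 * m ≤ 3 * m),
      ← Finset.sum_Ico_consecutive _ (by omega : 0 ≤ m) (by omega : m ≤ 2 * m)]
    have e1 : ∑ j ∈ Finset.Ico 0 m, euclWt (U j - r * G j) = m * euclWt (0 - r * 1) := by
      rw [sum_Ico_const _ 0 m (euclWt (0 - r * 1)) (fun j h1 h2 => by
        simp only [hU, hG]
        rw [if_pos h2, if_pos (by omega : j < m + m)]),
        (by omega : m - 0 = m)]
    have e2 : ∑ j ∈ Finset.Ico m (2 * m), euclWt (U j - r * G j) = m * euclWt (2 - r * 1) := by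
      rw [sum_Ico_const _ m (2 * m) (euclWt (2 - r * 1)) (fun j h1 h2 => by
        simp only [hU, hG]
        rw [if_neg (by omega), if_pos h2, if_pos (by omega : j < m + m)]),
        (by omega : 2 * m - m = m)]
    have e3 : ∑ j ∈ Finset.Ico (2 * m) (3 * m), euclWt (U j - r * G j)
        = m * euclWt (0 - r * 2) := by
      rw [sum_Ico_const _ (2 * m) (3 * m) (euclWt (0 - r * 2)) (fun j h1 h2 => by
        simp only [hU, hG]
        rw [if_neg (by omega), if_neg (by omega), if_pos h2,
          if_neg (by omega : ¬ j < m + m), if_pos (by omega : j < 2 * (m + m))]),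
        (by omega : 3 * m - 2 * m = m)]
    have e4 : ∑ j ∈ Finset.Ico (3 * m) (4 * m), euclWt (U j - r * G j)
        = m * euclWt (2 - r * 2) := by
      rw [sum_Ico_const _ (3 * m) (4 * m) (euclWt (2 - r * 2)) (fun j h1 h2 => by
        simp only [hU, hG]
        rw [if_neg (by omega), if_neg (by omega), if_neg (by omega), if_pos h2,
          if_neg (by omega : ¬ j < m + m), if_pos (by omega : j < 2 * (m + m))]),
        (by omega : 4 * m - 3 * m = m)]
    have e5 : ∑ j ∈ Finset.Ico (4 * m) (5 * m), euclWt (U j - r * G j)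
        = m * euclWt (1 - r * 3) := by
      rw [sum_Ico_const _ (4 * m) (5 * m) (euclWt (1 - r * 3)) (fun j h1 h2 => by
        simp only [hU, hG]
        rw [if_neg (by omega), if_neg (by omega), if_neg (by omega), if_neg (by omega),
          if_pos h2, if_neg (by omega : ¬ j < m + m), if_neg (by omega : ¬ j < 2 * (m + m))]),
        (by omega : 5 * m - 4 * m = m)]
    have e6 : ∑ j ∈ Finset.Ico (5 * m) (3 * (m + m)), euclWt (U j - r * G j)
        = m * euclWt (3 - r * 3) := by
      rw [sum_Ico_const _ (5 * m) (3 * (m + m)) (euclWt (3 - r * 3)) (fun j h1 h2 => by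
        simp only [hU, hG]
        rw [if_neg (by omega), if_neg (by omega), if_neg (by omega), if_neg (by omega),
          if_neg (by omega), if_neg (by omega : ¬ j < m + m),
          if_neg (by omega : ¬ j < 2 * (m + m))]),
        (by omega : 3 * (m + m) - 5 * m = m)]
    rw [e1, e2, e3, e4, e5, e6]
    have hs := keyS r
    calc m * euclWt (0 - r * 1) + m * euclWt (2 - r * 1) + m * euclWt (0 - r * 2)
          + m * euclWt (2 - r * 2) + m * euclWt (1 - r * 3) + m * euclWt (3 - r * 3)
        = m * (euclWt (0 - r*1) + euclWt (2 - r*1) + euclWt (0 - r*2)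
            + euclWt (2 - r*2) + euclWt (1 - r*3) + euclWt (3 - r*3)) := by ring
      _ = 5 * (m + m) := by rw [hs]; omega
  have hsInf_ge : 5 * (m + m) ≤ sInf (dEucl u0 '' (BRep : Set _)) := by
    refine le_csInf ⟨dEucl u0 g, ⟨g, hCg, rfl⟩⟩ ?_
    rintro b ⟨c, hc, rfl⟩
    obtain ⟨r, rfl⟩ := hsur c hc
    exact (hlow r).ge
  have hbdd : BddAbove (Set.range fun u : Fin (3 * (m + m)) → ZMod 4 =>
      sInf (dEucl u '' (BRep : Set _))) := ⟨5 * (m + m), by rintro x ⟨u, rfl⟩; exact upper u⟩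
  constructor
  · calc 5 * (m + m) ≤ sInf (dEucl u0 '' (BRep : Set _)) := hsInf_ge
      _ ≤ covRadEucl (BRep : Set _) := le_csSup hbdd ⟨u0, rfl⟩
  · have hle : covRadEucl (BRep : Set (Fin (3 * (m + m)) → ZMod 4)) ≤ 5 * (m + m) :=
      csSup_le ⟨_, ⟨0, rfl⟩⟩ (by rintro x ⟨u, rfl⟩; exact upper u)
    omega
end

section
/- Let 1 ≤ u ≤ k−1 and let M_{k,u}^α be the quaternary MacDonald code of type α. Then for every r with u < r ≤ k: r_L(M_{k,u}^α) ≤ 4^k − 4^r + r_L(M_{r,u}^α), and 6·r_E(M_{k,u}^α) ≤ 11(4^k − 4^r) + 6·r_E(M_{r,u}^α). -/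
/-- The quaternary MacDonald code of type α, `M_{k,u}^α`: the `ZMod 4`-span of the rows of
the `k × (4^k - 4^u)` matrix whose columns are exactly all vectors of `(ZMod 4)^k` whose
first `k - u` coordinates are not all zero, each occurring once. Codewords are indexed by
these columns. -/
def macDonaldAlpha (k u : ℕ) :
    Set ({v : Fin k → ZMod 4 // ∃ i : Fin k, (i : ℕ) < k - u ∧ v i ≠ 0} → ZMod 4) :=
  Set.range fun a : Fin k → ZMod 4 =>
    fun v : {v : Fin k → ZMod 4 // ∃ i : Fin k, (i : ℕ) < k - u ∧ v i ≠ 0} =>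
      ∑ i, a i * v.1 i

/-!
Write `k = m + r` and split every column of `M_{k,u}` into its first `m` coordinates (the head)
and its last `r` (the tail). The columns with zero head are the columns of `M_{r,u}` padded with
zeros, and the codeword with coefficient vector `(b, a)` restricts to them as the codeword `a` of
`M_{r,u}`, whatever `b`. Given a received word `x`, choose `a` nearest to the restriction of `x`
and average the distance over the `4^m` choices of `b`: on a column with nonzero head `h`, the
value `b ⬝ h` is equidistributed over the ideal spanned by the entries of `h`, so such a column
costs `1` on average for the Lee weight, and `6/4` or `8/4` for the Euclidean weight according as
`h` has a unit entry or lies in `{0,2}^m`. Some `b` is no worse than the average, and there are at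
most `4^r (4^m - 1)` columns with nonzero head, of which at most `4^r (2^m - 1)` lie in `{0,2}^m`.
-/

open Finset

noncomputable def covRadius {X Y : Type*} (d : X → Y → ℕ) (C : Set Y) : ℕ :=
  sSup (Set.range fun x => sInf (d x '' C))

def wtDist {ι : Type*} [Fintype ι] (w : ZMod 4 → ℕ) (x y : ι → ZMod 4) : ℕ :=
  ∑ i, w (x i - y i)

theorem covRadLee_eq_covRadius {ι : Type*} [Fintype ι] (C : Set (ι → ZMod 4)) :
    covRadLee C = covRadius (wtDist leeWt) C := rfl

theorem covRadEucl_eq_covRadius {ι : Type*} [Fintype ι] (C : Set (ι → ZMod 4)) :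
    covRadEucl C = covRadius (wtDist euclWt) C := rfl

theorem mul_covRadius_le_mul_covRadius_add {X Y X' Y' : Type*} [Finite X] [Nonempty X]
    [Finite X'] {d : X → Y → ℕ} {d' : X' → Y' → ℕ} {C : Set Y} {C' : Set Y'}
    (hC' : C'.Nonempty) (π : X → X') (q N : ℕ)
    (h : ∀ x, ∀ c' ∈ C', ∃ c ∈ C, q * d x c ≤ q * d' (π x) c' + N) :
    q * covRadius d C ≤ q * covRadius d' C' + N := by
  obtain ⟨x, hx⟩ := Nat.sSup_mem (Set.range_nonempty fun x => sInf (d x '' C))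
    (Set.finite_range _).bddAbove
  obtain ⟨c', hc', hc'min⟩ := Nat.sInf_mem (hC'.image (d' (π x)))
  obtain ⟨c, hc, hle⟩ := h x c' hc'
  calc q * covRadius d C = q * sInf (d x '' C) := by rw [covRadius, ← hx]
    _ ≤ q * d x c := Nat.mul_le_mul_left _ (Nat.sInf_le ⟨c, hc, rfl⟩)
    _ ≤ q * d' (π x) c' + N := hle
    _ ≤ q * covRadius d' C' + N := by
      rw [hc'min]
      gcongr
      exact le_csSup (Set.finite_range _).bddAbove ⟨π x, rfl⟩

theorem card_mul_sum_sub_dotProduct_le {R ι : Type*} [Ring R] [Fintype R] [Fintype ι]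
    [DecidableEq ι] (f : R → ℕ) (h : ι → R) (i₀ : ι) (T : ℕ)
    (hT : ∀ z, ∑ c, f (z - c * h i₀) ≤ T) (y : R) :
    Fintype.card R * ∑ b : ι → R, f (y - b ⬝ᵥ h) ≤ Fintype.card (ι → R) * T := by
  have shift (c : R) :
      ∑ b : ι → R, f (y - b ⬝ᵥ h) = ∑ b : ι → R, f (y - b ⬝ᵥ h - c * h i₀) := by
    rw [← Equiv.sum_comp (Equiv.addRight (Pi.single i₀ c))]
    simp [add_dotProduct, single_dotProduct, sub_add_eq_sub_sub]
  calc Fintype.card R * ∑ b : ι → R, f (y - b ⬝ᵥ h)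
      = ∑ c : R, ∑ b : ι → R, f (y - b ⬝ᵥ h - c * h i₀) := by
        rw [← card_univ, ← smul_eq_mul, ← sum_const]
        exact sum_congr rfl fun c _ => shift c
    _ = ∑ b : ι → R, ∑ c : R, f (y - b ⬝ᵥ h - c * h i₀) := sum_comm
    _ ≤ ∑ _b : ι → R, T := sum_le_sum fun b _ => hT _
    _ = Fintype.card (ι → R) * T := by simp

theorem sum_leeWt_sub_mul {e : ZMod 4} (he : e ≠ 0) (y : ZMod 4) :
    ∑ c, leeWt (y - c * e) = 4 := by
  revert y e; decide

theorem sum_euclWt_sub_mul_le {e : ZMod 4} (he : e ≠ 0) (y : ZMod 4) :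
    ∑ c, euclWt (y - c * e) ≤ 8 := by
  revert y e; decide

theorem sum_euclWt_sub_mul {e : ZMod 4} (he : e ≠ 0) (he2 : e ≠ 2) (y : ZMod 4) :
    ∑ c, euclWt (y - c * e) = 6 := by
  revert y e; decide

namespace MacDonaldAlpha

abbrev Col (k u : ℕ) := {v : Fin k → ZMod 4 // ∃ i : Fin k, (i : ℕ) < k - u ∧ v i ≠ 0}

def codeword {k u : ℕ} (a : Fin k → ZMod 4) : Col k u → ZMod 4 := fun v => a ⬝ᵥ v.1

variable {m r u : ℕ}

def head (v : Fin (m + r) → ZMod 4) : Fin m → ZMod 4 := fun i => v (Fin.castAdd r i)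

def tail (v : Fin (m + r) → ZMod 4) : Fin r → ZMod 4 := fun j => v (Fin.natAdd m j)

theorem append_dotProduct (b : Fin m → ZMod 4) (a : Fin r → ZMod 4)
    (v : Fin (m + r) → ZMod 4) : Fin.append b a ⬝ᵥ v = b ⬝ᵥ head v + a ⬝ᵥ tail v := by
  simp [dotProduct, Fin.sum_univ_add, head, tail]

def lift (w : Col r u) : Col (m + r) u := by
  refine ⟨Fin.append 0 w.1, ?_⟩
  obtain ⟨j, hj, hne⟩ := w.2
  exact ⟨Fin.natAdd m j, by simp only [Fin.val_natAdd]; omega, by simpa using hne⟩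

@[simp] theorem head_lift (w : Col r u) : head (lift (m := m) w).1 = 0 := by
  funext i; simp [lift, head]

@[simp] theorem tail_lift (w : Col r u) : tail (lift (m := m) w).1 = w.1 := by
  funext j; simp [lift, tail]

theorem exists_tail_ne_zero {v : Col (m + r) u} (hv : head v.1 = 0) :
    ∃ j : Fin r, (j : ℕ) < r - u ∧ tail v.1 j ≠ 0 := by
  obtain ⟨i, hi, hne⟩ := v.2
  induction i using Fin.addCases with
  | left i => exact absurd (congr_fun hv i) hne
  | right j => exact ⟨j, by simp only [Fin.val_natAdd] at hi; omega, hne⟩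

theorem lift_eq_iff {v : Col (m + r) u} {w : Col r u} :
    lift w = v ↔ head v.1 = 0 ∧ tail v.1 = w.1 := by
  constructor
  · rintro rfl; simp
  · rintro ⟨hh, ht⟩
    apply Subtype.ext
    rw [← Fin.append_castAdd_natAdd (f := v.1)]
    exact congrArg₂ Fin.append hh.symm ht.symm

theorem sum_filter_head_eq_zero (φ : Col (m + r) u → ℕ) :
    ∑ v with head v.1 = 0, φ v = ∑ w : Col r u, φ (lift w) := by
  refine (sum_bij (fun w _ => lift w) (fun w _ => by simp) (fun w _ w' _ h => ?_)
    (fun v hv => ?_) (fun _ _ => rfl)).symm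
  · exact Subtype.ext (by simpa using congrArg (tail ·.1) h)
  · have hv := (mem_filter.mp hv).2
    exact ⟨⟨tail v.1, exists_tail_ne_zero hv⟩, mem_univ _, lift_eq_iff.mpr ⟨hv, rfl⟩⟩

theorem sum_filter_head_ne_zero_le (F : (Fin m → ZMod 4) → ℕ) :
    ∑ v : Col (m + r) u with head v.1 ≠ 0, F (head v.1)
      ≤ 4 ^ r * ∑ h ∈ univ.erase 0, F h := by
  set G : (Fin m → ZMod 4) → ℕ := fun h => if h ≠ 0 then F h else 0
  calc ∑ v : Col (m + r) u with head v.1 ≠ 0, F (head v.1)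
      = ∑ v : Col (m + r) u, G (head v.1) := sum_filter _ _
    _ ≤ ∑ v : Fin (m + r) → ZMod 4, G (head v) :=
      (sum_map univ (Function.Embedding.subtype _) (fun v => G (head v))).symm.trans_le
        (sum_le_univ_sum_of_nonneg fun _ => Nat.zero_le _)
    _ = ∑ p : (Fin m → ZMod 4) × (Fin r → ZMod 4), G p.1 :=
      Fintype.sum_equiv (Fin.appendEquiv m r).symm _ _ fun v => rfl
    _ = 4 ^ r * ∑ h ∈ univ.erase 0, F h := by
      rw [Fintype.sum_prod_type]
      simp [G, sum_ite, filter_ne', mul_sum]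

theorem four_mul_sum_wtDist_codeword_append_le (w : ZMod 4 → ℕ) (T : (Fin m → ZMod 4) → ℕ)
    (hT : ∀ h ≠ 0, ∀ y, 4 * ∑ b : Fin m → ZMod 4, w (y - b ⬝ᵥ h) ≤ 4 ^ m * T h)
    (x : Col (m + r) u → ZMod 4) (a : Fin r → ZMod 4) :
    4 * ∑ b : Fin m → ZMod 4, wtDist w x (codeword (Fin.append b a))
      ≤ 4 ^ (m + 1) * wtDist w (x ∘ lift) (codeword a)
        + 4 ^ (m + r) * ∑ h ∈ univ.erase 0, T h := by
  set y : Col (m + r) u → ZMod 4 := fun v => x v - a ⬝ᵥ tail v.1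
  have hsplit : 4 * ∑ b : Fin m → ZMod 4, wtDist w x (codeword (Fin.append b a))
      = ∑ v, 4 * ∑ b : Fin m → ZMod 4, w (y v - b ⬝ᵥ head v.1) := by
    simp only [wtDist, codeword, append_dotProduct, y, sub_add_eq_sub_sub_swap]
    rw [sum_comm, mul_sum]
  have hzero (v : Col (m + r) u) (hv : head v.1 = 0) :
      4 * ∑ b : Fin m → ZMod 4, w (y v - b ⬝ᵥ head v.1) = 4 ^ (m + 1) * w (y v) := by
    simp [hv, pow_succ]
    ring
  have hlift :
      ∑ v : Col (m + r) u with head v.1 = 0, w (y v) = wtDist w (x ∘ lift) (codeword a) := by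
    rw [sum_filter_head_eq_zero]
    simp [y, wtDist, codeword]
  rw [hsplit, ← sum_filter_add_sum_filter_not _ (fun v : Col (m + r) u => head v.1 = 0)]
  gcongr ?_ + ?_
  · rw [sum_congr rfl fun v hv => hzero v (mem_filter.mp hv).2, ← mul_sum, hlift]
  · calc _ ≤ ∑ v : Col (m + r) u with ¬head v.1 = 0, 4 ^ m * T (head v.1) :=
          sum_le_sum fun v hv => hT _ (mem_filter.mp hv).2 _
      _ ≤ 4 ^ (m + r) * ∑ h ∈ univ.erase 0, T h := by
          rw [← mul_sum, pow_add, mul_assoc]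
          exact Nat.mul_le_mul_left _ (sum_filter_head_ne_zero_le T)

theorem mul_covRadius_le (w : ZMod 4 → ℕ) (T : (Fin m → ZMod 4) → ℕ)
    (hT : ∀ h ≠ 0, ∀ y, 4 * ∑ b : Fin m → ZMod 4, w (y - b ⬝ᵥ h) ≤ 4 ^ m * T h)
    (q N : ℕ) (hN : q * 4 ^ r * ∑ h ∈ univ.erase 0, T h ≤ 4 * N) :
    q * covRadius (wtDist w) (macDonaldAlpha (m + r) u)
      ≤ q * covRadius (wtDist w) (macDonaldAlpha r u) + N := by
  refine mul_covRadius_le_mul_covRadius_add (C' := macDonaldAlpha r u) ⟨_, 0, rfl⟩ (· ∘ lift)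
    q N ?_
  rintro x _ ⟨a, rfl⟩
  set d := wtDist w (x ∘ lift) (codeword a)
  suffices ∑ b : Fin m → ZMod 4, q * wtDist w x (codeword (Fin.append b a))
      ≤ ∑ _b : Fin m → ZMod 4, (q * d + N) by
    obtain ⟨b, -, hb⟩ := exists_le_of_sum_le univ_nonempty this
    exact ⟨_, ⟨Fin.append b a, rfl⟩, hb⟩
  rw [← mul_sum, sum_const, card_univ, Fintype.card_fun, ZMod.card, Fintype.card_fin,
    smul_eq_mul]
  refine Nat.le_of_mul_le_mul_left ?_ (show 0 < 4 by norm_num)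
  calc 4 * (q * ∑ b : Fin m → ZMod 4, wtDist w x (codeword (Fin.append b a)))
      ≤ q * (4 ^ (m + 1) * d + 4 ^ (m + r) * ∑ h ∈ univ.erase 0, T h) := by
        rw [mul_left_comm]
        exact Nat.mul_le_mul_left _ (four_mul_sum_wtDist_codeword_append_le w T hT x a)
    _ = 4 ^ (m + 1) * (q * d) + 4 ^ m * (q * 4 ^ r * ∑ h ∈ univ.erase 0, T h) := by ring
    _ ≤ 4 * (4 ^ m * (q * d + N)) := by
        rw [pow_succ]
        nlinarith [Nat.mul_le_mul_left (4 ^ m) hN]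

theorem covRadLee_add_le (m r u : ℕ) :
    covRadLee (macDonaldAlpha (m + r) u)
      ≤ 4 ^ (m + r) - 4 ^ r + covRadLee (macDonaldAlpha r u) := by
  have hT (h : Fin m → ZMod 4) (hh : h ≠ 0) (y : ZMod 4) :
      4 * ∑ b : Fin m → ZMod 4, leeWt (y - b ⬝ᵥ h) ≤ 4 ^ m * 4 := by
    obtain ⟨i₀, hi₀⟩ := Function.ne_iff.mp hh
    simpa [ZMod.card, Fintype.card_fun] using
      card_mul_sum_sub_dotProduct_le leeWt h i₀ 4 (fun z => (sum_leeWt_sub_mul hi₀ z).le) y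
  have hN : 1 * 4 ^ r * ∑ _h ∈ univ.erase (0 : Fin m → ZMod 4), 4
      ≤ 4 * (4 ^ (m + r) - 4 ^ r) := by
    rw [sum_const, card_erase_of_mem (mem_univ _), card_univ, Fintype.card_fun, ZMod.card,
      Fintype.card_fin, smul_eq_mul, pow_add, ← Nat.sub_one_mul]
    exact le_of_eq (by ring)
  have := mul_covRadius_le (u := u) leeWt _ hT 1 _ hN
  rw [one_mul, one_mul, ← covRadLee_eq_covRadius, ← covRadLee_eq_covRadius] at this
  exact this.trans_eq (Nat.add_comm _ _)

theorem covRadEucl_add_le (m r u : ℕ) :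
    6 * covRadEucl (macDonaldAlpha (m + r) u)
      ≤ 11 * (4 ^ (m + r) - 4 ^ r) + 6 * covRadEucl (macDonaldAlpha r u) := by
  set P := Fintype.piFinset fun _ : Fin m => ({0, 2} : Finset (ZMod 4))
  -- a head in `{0,2}^m` has only `0` and `2` as values of `b ⬝ᵥ h`
  set T : (Fin m → ZMod 4) → ℕ := fun h => 6 + if h ∈ P then 2 else 0
  have hT (h : Fin m → ZMod 4) (hh : h ≠ 0) (y : ZMod 4) :
      4 * ∑ b : Fin m → ZMod 4, euclWt (y - b ⬝ᵥ h) ≤ 4 ^ m * T h := by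
    by_cases hP : h ∈ P
    · obtain ⟨i₀, hi₀⟩ := Function.ne_iff.mp hh
      simpa [T, hP, ZMod.card, Fintype.card_fun] using
        card_mul_sum_sub_dotProduct_le euclWt h i₀ 8 (sum_euclWt_sub_mul_le hi₀) y
    · obtain ⟨i₀, hi₀⟩ : ∃ i, h i ∉ ({0, 2} : Finset (ZMod 4)) := by
        simpa [P, Fintype.mem_piFinset] using hP
      simp only [mem_insert, mem_singleton, not_or] at hi₀
      simpa [T, hP, ZMod.card, Fintype.card_fun] using
        card_mul_sum_sub_dotProduct_le euclWt h i₀ 6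
          (fun z => (sum_euclWt_sub_mul hi₀.1 hi₀.2 z).le) y
  have hsum : ∑ h ∈ univ.erase 0, T h + 8 = 6 * 4 ^ m + 2 * 2 ^ m := by
    have hT0 : T 0 = 8 := by simp [T, P]
    rw [add_comm, ← hT0, add_sum_erase _ _ (mem_univ _)]
    simp only [T, sum_add_distrib, sum_ite_mem, sum_const, smul_eq_mul, card_univ,
      Fintype.card_fun, ZMod.card, Fintype.card_fin, P, univ_inter, Fintype.card_piFinset_const]
    rw [show #({0, 2} : Finset (ZMod 4)) = 2 from rfl]
    ring
  have hN : 6 * 4 ^ r * ∑ h ∈ univ.erase 0, T h ≤ 4 * (11 * (4 ^ (m + r) - 4 ^ r)) := by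
    have hp : 1 ≤ 2 ^ m := Nat.one_le_two_pow
    have h4 : 4 ^ m = 2 ^ m * 2 ^ m := by rw [← mul_pow]; norm_num
    have hS : 6 * ∑ h ∈ univ.erase 0, T h ≤ 44 * (4 ^ m - 1) := by
      rw [h4] at hsum ⊢
      zify [hp, Nat.one_le_iff_ne_zero.mpr (by positivity : 2 ^ m * 2 ^ m ≠ 0)] at hsum ⊢
      nlinarith
    rw [pow_add, ← Nat.sub_one_mul]
    calc 6 * 4 ^ r * ∑ h ∈ univ.erase 0, T h
        = 4 ^ r * (6 * ∑ h ∈ univ.erase 0, T h) := by ring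
      _ ≤ 4 ^ r * (44 * (4 ^ m - 1)) := Nat.mul_le_mul_left _ hS
      _ = 4 * (11 * ((4 ^ m - 1) * 4 ^ r)) := by ring
  have := mul_covRadius_le (u := u) euclWt _ hT 6 _ hN
  rw [← covRadEucl_eq_covRadius, ← covRadEucl_eq_covRadius] at this
  exact this.trans_eq (Nat.add_comm _ _)

end MacDonaldAlpha

theorem stmt18_general (k u r : ℕ) (hrk : r ≤ k) :
    covRadLee (macDonaldAlpha k u) ≤ 4 ^ k - 4 ^ r + covRadLee (macDonaldAlpha r u) ∧
      6 * covRadEucl (macDonaldAlpha k u) ≤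
        11 * (4 ^ k - 4 ^ r) + 6 * covRadEucl (macDonaldAlpha r u) := by
  obtain ⟨m, rfl⟩ := Nat.exists_eq_add_of_le' hrk
  exact ⟨MacDonaldAlpha.covRadLee_add_le m r u, MacDonaldAlpha.covRadEucl_add_le m r u⟩

/-- Recursive bounds on the covering radii of the type α quaternary MacDonald codes. -/
theorem stmt18 (k u r : ℕ) (hu : 1 ≤ u) (huk : u ≤ k - 1) (hur : u < r) (hrk : r ≤ k) :
    covRadLee (macDonaldAlpha k u) ≤ 4 ^ k - 4 ^ r + covRadLee (macDonaldAlpha r u) ∧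
      6 * covRadEucl (macDonaldAlpha k u) ≤
        11 * (4 ^ k - 4 ^ r) + 6 * covRadEucl (macDonaldAlpha r u) :=
  stmt18_general k u r hrk
end
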